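/- Let k be an algebraic closure of F_3 and let G be a subgroup of GL_2(k) whose image in PGL_2(k) is conjugate to PSL_2(F_3) or to PGL_2(F_3). Then G is conjugate in GL_2(k) to a subgroup of k^× · GL_2(F_3), the subgroup of GL_2(k) generated by the scalar matrices and GL_2(F_3) (embedded via the inclusion F_3 ↪ k). -/

import Mathlib

/-! Both `PSL₂(𝔽₃)` and `PGL₂(𝔽₃)` lie in the image of `GL₂(𝔽₃)` in `PGL₂(k)`. Lifting the
conjugating element from `PGL₂(k)` to `GL₂(k)`, the conjugate of `G` lands in the preimage of
that image, which is `GL₂(𝔽₃)` times the kernel of `GL₂(k) → PGL₂(k)`, i.e. times the scalars. -/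

open Matrix

noncomputable section

/-- `PGL₂` of a field (or commutative ring): the quotient of `GL₂` by its center. -/
abbrev PGL2 (K : Type*) [CommRing K] : Type _ :=
  GL (Fin 2) K ⧸ Subgroup.center (GL (Fin 2) K)

/-- The natural projection `GL₂(K) → PGL₂(K)`. -/
def toPGL2 (K : Type*) [CommRing K] : GL (Fin 2) K →* PGL2 K :=
  QuotientGroup.mk' _

/-- The image of `PGL₂(R)` in `PGL₂(k)` induced by a ring homomorphism `f : R →+* k`
(e.g. the inclusion of a finite field into an algebraic closure). -/
def PGLsub {R k : Type*} [CommRing R] [CommRing k] (f : R →+* k) : Subgroup (PGL2 k) :=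
  ((toPGL2 k).comp (Matrix.GeneralLinearGroup.map f)).range

/-- The image of `PSL₂(R)` (i.e. the image of `SL₂(R)`) in `PGL₂(k)` induced by a ring
homomorphism `f : R →+* k`. -/
def PSLsub {R k : Type*} [CommRing R] [CommRing k] (f : R →+* k) : Subgroup (PGL2 k) :=
  ((toPGL2 k).comp ((Matrix.GeneralLinearGroup.map f).comp
    Matrix.SpecialLinearGroup.toGL)).range

/-- Two subgroups of a group are conjugate. -/
def IsConjSubgroup {G : Type*} [Group G] (H K : Subgroup G) : Prop :=
  ∃ g : G, Subgroup.map (MulAut.conj g).toMonoidHom H = K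

/-- The subgroup of scalar matrices in `GL₂(k)`. -/
def scalarGL2 (k : Type*) [Field k] : Subgroup (GL (Fin 2) k) :=
  (Units.map (algebraMap k (Matrix (Fin 2) (Fin 2) k)).toMonoidHom).range

theorem Subgroup.map_map_conj {G Q : Type*} [Group G] [Group Q] (φ : G →* Q) (K : Subgroup G)
    (g : G) :
    (K.map (MulAut.conj g).toMonoidHom).map φ = (K.map φ).map (MulAut.conj (φ g)).toMonoidHom := by
  simp only [Subgroup.map_map]
  congr 1
  ext x
  simp

theorem Subgroup.exists_map_conj_le_comap_of_surjective {G Q : Type*} [Group G] [Group Q]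
    {φ : G →* Q} (hφ : Function.Surjective φ) {K : Subgroup G} {H : Subgroup Q} {q : Q}
    (hq : (K.map φ).map (MulAut.conj q).toMonoidHom ≤ H) :
    ∃ x : G, K.map (MulAut.conj x).toMonoidHom ≤ H.comap φ := by
  obtain ⟨x, rfl⟩ := hφ q
  exact ⟨x, Subgroup.map_le_iff_le_comap.mp (Subgroup.map_map_conj φ K x ▸ hq)⟩

theorem scalarGL2_eq_center (k : Type*) [Field k] :
    scalarGL2 k = Subgroup.center (GL (Fin 2) k) := by
  rw [GeneralLinearGroup.center_eq_range_scalar]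
  rfl

theorem toPGL2_surjective (K : Type*) [CommRing K] : Function.Surjective (toPGL2 K) :=
  QuotientGroup.mk'_surjective _

theorem PSLsub_le_PGLsub {R k : Type*} [CommRing R] [CommRing k] (f : R →+* k) :
    PSLsub f ≤ PGLsub f := by
  rintro _ ⟨a, rfl⟩
  exact ⟨SpecialLinearGroup.toGL a, rfl⟩

theorem comap_toPGL2_PGLsub {R k : Type*} [CommRing R] [CommRing k] (f : R →+* k) :
    (PGLsub f).comap (toPGL2 k) =
      Subgroup.center (GL (Fin 2) k) ⊔ (GeneralLinearGroup.map f).range := by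
  rw [PGLsub, MonoidHom.range_comp, Subgroup.comap_map_eq, toPGL2, QuotientGroup.ker_mk',
    sup_comm]

/-- A subgroup of `GL₂(k)` (`k` an algebraic closure of `𝔽₃`) whose image in `PGL₂(k)` is
conjugate to `PSL₂(𝔽₃)` or to `PGL₂(𝔽₃)` is conjugate in `GL₂(k)` to a subgroup of
`k^× · GL₂(𝔽₃)`, the subgroup generated by the scalars and `GL₂(𝔽₃)`. -/
theorem conj_le_scalars_mul_gl_three
    (G : Subgroup (GL (Fin 2) (AlgebraicClosure (ZMod 3))))
    (h : IsConjSubgroup (Subgroup.map (toPGL2 (AlgebraicClosure (ZMod 3))) G)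
        (PSLsub (algebraMap (ZMod 3) (AlgebraicClosure (ZMod 3)))) ∨
      IsConjSubgroup (Subgroup.map (toPGL2 (AlgebraicClosure (ZMod 3))) G)
        (PGLsub (algebraMap (ZMod 3) (AlgebraicClosure (ZMod 3))))) :
    ∃ x : GL (Fin 2) (AlgebraicClosure (ZMod 3)),
      Subgroup.map (MulAut.conj x).toMonoidHom G ≤
        scalarGL2 (AlgebraicClosure (ZMod 3)) ⊔
          (Matrix.GeneralLinearGroup.map
            (algebraMap (ZMod 3) (AlgebraicClosure (ZMod 3)))).range := by
  set k := AlgebraicClosure (ZMod 3)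
  set f := algebraMap (ZMod 3) k
  obtain ⟨q, hq⟩ : ∃ q : PGL2 k, (G.map (toPGL2 k)).map (MulAut.conj q).toMonoidHom ≤ PGLsub f := by
    rcases h with ⟨q, hq⟩ | ⟨q, hq⟩
    · exact ⟨q, hq.trans_le (PSLsub_le_PGLsub f)⟩
    · exact ⟨q, hq.le⟩
  obtain ⟨x, hx⟩ := Subgroup.exists_map_conj_le_comap_of_surjective (toPGL2_surjective k) hq
  rw [comap_toPGL2_PGLsub, ← scalarGL2_eq_center] at hx
  exact ⟨x, hx⟩
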